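/- For every hard-sphere flow of N particles of radius a>0 in ℝ^n (with only binary collisions and finitely many collisions in every time slab), every particle α admits limit velocities v_{α+} = lim_{t→+∞} v_α(t) and v_{α−} = lim_{t→−∞} v_α(t), and there exists a finite constant c_n depending only on n such that ∑_{α=1}^N |v_{α+} − v_α(0)| ≤ c_n · N² · 𝐯 and ∑_{α=1}^N |v_{α−} − v_α(0)| ≤ c_n · N² · 𝐯. -/

import Mathlib

/-!
Between collisions the virial `V(t) = ∑ ⟪y_α, v_α⟫` grows at the constant rate `∑ |v_α|² = 2E`;
at a collision it jumps by `a ∑ |v'_α - v_α|`, because the impulse on each particle points along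
the line of centres, of length `2a`, away from its partner. Writing `|y|` for the Euclidean norm of
the configuration in `(ℝⁿ)ᴺ`, we have `|V| ≤ |y| √(2E)` and `|y(t) - y(s)| ≤ (t - s) √(2E)`, so
comparing `V` at the two ends of `[s, t]` bounds the total velocity jump over `[s, t]` by
`2 |y(s)| √(2E) / a` and by `2 |y(t)| √(2E) / a`. Hence the velocities have bounded variation on
each half line and converge at `±∞`. The limits keep the conserved spread `∑ |v_α - w|² = N 𝐯²`,
and Cauchy–Schwarz gives `∑ |v_{α±} - v_α(0)| ≤ 2 N 𝐯 ≤ 2 N² 𝐯`.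
-/

open scoped BigOperators RealInnerProductSpace
open Filter

noncomputable section

/-- A hard-sphere flow of `N` identical particles of radius `a > 0` and unit mass in `ℝⁿ`,
with only binary collisions and finitely many collisions in every time slab.
`y α` is the (continuous, piecewise affine) center trajectory of particle `α`,
`v α t` is its outgoing velocity (the right derivative of `y α` at `t`) and
`vIn α t` its incoming velocity (the left limit of the velocity at `t`).
A *kink* of particle `α` is a time `t` with `vIn α t ≠ v α t`. -/
structure HardSphereFlow (n N : ℕ) where
  /-- the common radius of the spheres -/
  a : ℝ
  a_pos : 0 < a
  /-- center trajectories -/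
  y : Fin N → ℝ → EuclideanSpace ℝ (Fin n)
  /-- outgoing (right) velocities -/
  v : Fin N → ℝ → EuclideanSpace ℝ (Fin n)
  /-- incoming (left) velocities -/
  vIn : Fin N → ℝ → EuclideanSpace ℝ (Fin n)
  y_continuous : ∀ α, Continuous (y α)
  /-- `v α t` is the right derivative of `y α` at `t` -/
  v_right_deriv : ∀ α t, HasDerivWithinAt (y α) (v α t) (Set.Ici t) t
  /-- `vIn α t` is the left limit of the velocity at `t` -/
  vIn_left_limit : ∀ α t, ∀ᶠ s in nhdsWithin t (Set.Iio t), v α s = vIn α t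
  /-- the velocity is constant between consecutive kinks, and the motion is affine there -/
  piecewise_affine : ∀ (α : Fin N) (s t : ℝ), s ≤ t →
    (∀ u, s < u → u ≤ t → vIn α u = v α u) →
    v α t = v α s ∧ y α t = y α s + (t - s) • v α s
  /-- the set of kink times is finite in every time slab -/
  kinks_finite : ∀ (α : Fin N) (t₁ t₂ : ℝ),
    {t | t ∈ Set.Icc t₁ t₂ ∧ vIn α t ≠ v α t}.Finite
  /-- hard spheres never overlap -/
  no_overlap : ∀ (t : ℝ) (α β : Fin N), α ≠ β → 2 * a ≤ dist (y β t) (y α t)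
  /-- at a kink of particle `α` there is exactly one particle touching it -/
  partner_unique : ∀ (α : Fin N) (t : ℝ), vIn α t ≠ v α t →
    ∃! β : Fin N, β ≠ α ∧ dist (y β t) (y α t) = 2 * a
  /-- at a kink, the touching particle also has a kink, and the collision rules hold:
  conservation of momentum and of kinetic energy, frictionless (normal) exchange of
  momentum, and the approach/separation inequalities -/
  collision_rules : ∀ (α β : Fin N) (t : ℝ), vIn α t ≠ v α t → β ≠ α →
    dist (y β t) (y α t) = 2 * a →
      vIn β t ≠ v β t ∧
      v α t + v β t = vIn α t + vIn β t ∧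
      ‖v α t‖ ^ 2 + ‖v β t‖ ^ 2 = ‖vIn α t‖ ^ 2 + ‖vIn β t‖ ^ 2 ∧
      v α t - vIn α t = vIn β t - v β t ∧
      (∃ c : ℝ, v α t - vIn α t = c • (y β t - y α t)) ∧
      ⟪vIn β t - vIn α t, y β t - y α t⟫ < 0 ∧
      0 < ⟪v β t - v α t, y β t - y α t⟫
  /-- no two distinct collisions occur at the same time -/
  one_collision_at_a_time : ∀ (t : ℝ) (α β : Fin N),
    vIn α t ≠ v α t → vIn β t ≠ v β t → β ≠ α →
    dist (y β t) (y α t) = 2 * a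

namespace HardSphereFlow

variable {n N : ℕ} (F : HardSphereFlow n N)

/-- The set of kink times of particle `α`. -/
def KinkTimes (α : Fin N) : Set ℝ := {t : ℝ | F.vIn α t ≠ F.v α t}

/-- The set of all kinks `(α, t*)` of the flow. -/
def Kinks : Set (Fin N × ℝ) := {p : Fin N × ℝ | F.vIn p.1 p.2 ≠ F.v p.1 p.2}

/-- The total energy `E = ½ ∑ |v_α(0)|²`. -/
def totalEnergy : ℝ := (1 / 2) * ∑ α : Fin N, ‖F.v α 0‖ ^ 2

/-- The mean velocity `w = Q/N`. -/
def meanVelocity : EuclideanSpace ℝ (Fin n) := (N : ℝ)⁻¹ • ∑ α : Fin N, F.v α 0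

/-- The root mean square velocity `v̄ = √(2E/N)`. -/
def vbar : ℝ := Real.sqrt (2 * F.totalEnergy / N)

/-- The standard deviation `𝐯 = √(v̄² - |w|²)` of the velocity distribution. -/
def vdev : ℝ := Real.sqrt (F.vbar ^ 2 - ‖F.meanVelocity‖ ^ 2)

end HardSphereFlow

/-- `wedge u u' = |u ∧ u'| = √(|u|²|u'|² - (u⋅u')²)`, the area of the parallelogram
spanned by `u` and `u'`. -/
def wedge {E : Type*} [NormedAddCommGroup E] [InnerProductSpace ℝ E] (u u' : E) : ℝ :=
  Real.sqrt (‖u‖ ^ 2 * ‖u'‖ ^ 2 - (⟪u, u'⟫ : ℝ) ^ 2)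

open Set Topology

section Norms

variable {E : Type*} [SeminormedAddCommGroup E]

theorem sum_norm_le_sqrt_card_mul_sum_sq {ι : Type*} [Fintype ι] (f : ι → E) :
    ∑ i, ‖f i‖ ≤ √(Fintype.card ι * ∑ i, ‖f i‖ ^ 2) :=
  Real.le_sqrt_of_sq_le <| by
    simpa using sq_sum_le_card_mul_sum_sq (s := Finset.univ) (f := (‖f ·‖))

def IsCollisionInvariant (φ : E → ℝ) : Prop :=
  ∀ x y x' y' : E, x' + y' = x + y → ‖x'‖ ^ 2 + ‖y'‖ ^ 2 = ‖x‖ ^ 2 + ‖y‖ ^ 2 →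
    φ x' + φ y' = φ x + φ y

theorem isCollisionInvariant_norm_sq : IsCollisionInvariant (fun x : E => ‖x‖ ^ 2) :=
  fun _ _ _ _ _ h => h

variable [InnerProductSpace ℝ E]

theorem isCollisionInvariant_norm_sub_sq (w : E) :
    IsCollisionInvariant (fun x : E => ‖x - w‖ ^ 2) := by
  intro x y x' y' hmom hen
  have := congrArg (⟪·, w⟫) hmom
  simp only [inner_add_left] at this
  simp only [norm_sub_sq_real]
  linarith

theorem sum_norm_sub_sq {ι : Type*} [Fintype ι] (f : ι → E) (w : E) :
    ∑ i, ‖f i - w‖ ^ 2 = ∑ i, ‖f i‖ ^ 2 - 2 * ⟪∑ i, f i, w⟫ + Fintype.card ι * ‖w‖ ^ 2 := by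
  simp only [norm_sub_sq_real, Finset.sum_add_distrib, Finset.sum_sub_distrib, ← Finset.mul_sum,
    sum_inner, Finset.sum_const, Finset.card_univ, nsmul_eq_mul]

theorem real_inner_eq_neg_norm_mul_norm_of_eq_smul {r d : E} {c : ℝ} (hd : d = c • r)
    (hneg : ⟪r, d⟫ < 0) : ⟪r, d⟫ = -(‖r‖ * ‖d‖) := by
  subst hd
  rw [real_inner_smul_right, real_inner_self_eq_norm_sq] at *
  have hc : c < 0 := by
    by_contra! hc
    exact hneg.not_ge (by positivity)
  rw [norm_smul, Real.norm_eq_abs, abs_of_neg hc]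
  ring

end Norms

theorem exists_tendsto_atTop_of_dist_le_sub {X : Type*} [PseudoMetricSpace X] [CompleteSpace X]
    {f : ℝ → X} {g : ℝ → ℝ} (hg : BddAbove (g '' Ici 0))
    (hfg : ∀ s t, 0 ≤ s → s ≤ t → dist (f s) (f t) ≤ g t - g s) :
    ∃ L, Tendsto f atTop (𝓝 L) := by
  refine cauchySeq_tendsto_of_complete (Metric.cauchySeq_iff'.2 fun ε hε => ?_)
  obtain ⟨_, ⟨s, hs, rfl⟩, hlt⟩ :=
    exists_lt_of_lt_csSup ((nonempty_Ici).image g) (sub_lt_self (sSup (g '' Ici 0)) hε)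
  refine ⟨s, fun t hst => ?_⟩
  have := le_csSup hg ⟨t, mem_Ici.2 (le_trans hs hst), rfl⟩
  rw [dist_comm]
  linarith [hfg s t hs hst]

namespace HardSphereFlow

variable {n N : ℕ} (F : HardSphereFlow n N)

def collisionTimes : Set ℝ := ⋃ α, F.KinkTimes α

theorem vIn_eq_v_of_notMem_collisionTimes {t : ℝ} (ht : t ∉ F.collisionTimes) (α : Fin N) :
    F.vIn α t = F.v α t := by
  by_contra h
  exact ht (mem_iUnion.2 ⟨α, h⟩)

theorem finite_collisionTimes_inter_Icc (t₁ t₂ : ℝ) : (F.collisionTimes ∩ Icc t₁ t₂).Finite := by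
  rw [collisionTimes, iUnion_inter]
  exact finite_iUnion fun α => (F.kinks_finite α t₁ t₂).subset fun t ht => ⟨ht.2, ht.1⟩

theorem induction_on_collisions {P : ℝ → ℝ → Prop} (refl : ∀ t, P t t)
    (trans : ∀ s u t, s < u → u < t → P s u → P u t → P s t)
    (free : ∀ s t, s < t → Disjoint F.collisionTimes (Ioo s t) → P s t)
    {s t : ℝ} (hst : s ≤ t) : P s t := by
  rcases hst.eq_or_lt with rfl | hlt
  · exact refl s
  clear hst
  induction hk : (F.collisionTimes ∩ Ioo s t).ncard using Nat.strong_induction_on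
    generalizing s t with
  | _ k ih =>
  rcases (F.collisionTimes ∩ Ioo s t).eq_empty_or_nonempty with h | ⟨u, hu, hsu, hut⟩
  · exact free s t hlt (disjoint_iff_inter_eq_empty.2 h)
  have hfin : (F.collisionTimes ∩ Ioo s t).Finite :=
    (F.finite_collisionTimes_inter_Icc s t).subset (inter_subset_inter_right _ Ioo_subset_Icc_self)
  have fewer : ∀ {a b}, Ioo a b ⊆ Ioo s t → u ∉ Ioo a b → (F.collisionTimes ∩ Ioo a b).ncard < k :=
    fun hab hu' => hk ▸ ncard_lt_ncard ((ssubset_iff_of_subset (inter_subset_inter_right _ hab)).2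
      ⟨u, ⟨hu, hsu, hut⟩, fun h => hu' h.2⟩) hfin
  exact trans s u t hsu hut
    (ih _ (fewer (Ioo_subset_Ioo_right hut.le) fun h => h.2.false) hsu rfl)
    (ih _ (fewer (Ioo_subset_Ioo_left hsu.le) fun h => h.1.false) hut rfl)

theorem vIn_eq_and_y_eq_of_disjoint {s t : ℝ} (hst : s < t)
    (h : Disjoint F.collisionTimes (Ioo s t)) (α : Fin N) :
    F.vIn α t = F.v α s ∧ F.y α t = F.y α s + (t - s) • F.v α s := by
  have haff : ∀ᶠ u in 𝓝[<] t, F.v α u = F.v α s ∧ F.y α u = F.y α s + (u - s) • F.v α s := by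
    filter_upwards [Ioo_mem_nhdsLT hst] with u hu
    exact F.piecewise_affine α s u hu.1.le fun w hsw hwu =>
      F.vIn_eq_v_of_notMem_collisionTimes (disjoint_right.1 h ⟨hsw, hwu.trans_lt hu.2⟩) α
  constructor
  · obtain ⟨u, hu, hv, -⟩ := ((F.vIn_left_limit α t).and haff).exists
    rw [← hu, hv]
  · refine tendsto_nhds_unique ((F.y_continuous α).continuousWithinAt (s := Iio t)).tendsto ?_
    refine Tendsto.congr' (haff.mono fun u hu => hu.2.symm) ?_
    exact (Continuous.continuousWithinAt (by fun_prop)).tendsto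

theorem exists_collision_partner {t : ℝ} (ht : t ∈ F.collisionTimes) :
    ∃ α β, α ≠ β ∧ F.vIn α t ≠ F.v α t ∧ dist (F.y β t) (F.y α t) = 2 * F.a ∧
      ∀ γ, γ ≠ α ∧ γ ≠ β → F.vIn γ t = F.v γ t := by
  obtain ⟨α, hα⟩ := mem_iUnion.1 ht
  obtain ⟨β, ⟨hβα, hdist⟩, huniq⟩ := F.partner_unique α t hα
  refine ⟨α, β, hβα.symm, hα, hdist, fun γ ⟨hγα, hγβ⟩ => ?_⟩
  by_contra hγ
  exact hγβ (huniq γ ⟨hγα, F.one_collision_at_a_time t α γ hα hγ hγα⟩)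

theorem sum_comp_v_eq_sum_comp_vIn {φ : EuclideanSpace ℝ (Fin n) → ℝ}
    (hφ : IsCollisionInvariant φ) (t : ℝ) : ∑ α, φ (F.v α t) = ∑ α, φ (F.vIn α t) := by
  rw [← sub_eq_zero, ← Finset.sum_sub_distrib]
  by_cases ht : t ∈ F.collisionTimes
  · obtain ⟨α, β, hαβ, hα, hdist, hothers⟩ := F.exists_collision_partner ht
    obtain ⟨-, hmom, hen, -⟩ := F.collision_rules α β t hα hαβ.symm hdist
    rw [Fintype.sum_eq_add α β hαβ fun γ hγ => by rw [hothers γ hγ, sub_self]]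
    linarith [hφ _ _ _ _ hmom hen]
  · exact Finset.sum_eq_zero fun α _ => by rw [F.vIn_eq_v_of_notMem_collisionTimes ht, sub_self]

theorem sum_comp_v_eq {φ : EuclideanSpace ℝ (Fin n) → ℝ} (hφ : IsCollisionInvariant φ)
    (s t : ℝ) : ∑ α, φ (F.v α t) = ∑ α, φ (F.v α s) := by
  wlog hst : s ≤ t generalizing s t
  · exact (this t s (le_of_not_ge hst)).symm
  refine F.induction_on_collisions (P := fun s t => ∑ α, φ (F.v α t) = ∑ α, φ (F.v α s))
    (fun _ => rfl) (fun s u t _ _ h₁ h₂ => h₂.trans h₁) (fun s t hst h => ?_) hst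
  rw [F.sum_comp_v_eq_sum_comp_vIn hφ]
  exact Finset.sum_congr rfl fun α _ => by rw [(F.vIn_eq_and_y_eq_of_disjoint hst h α).1]

def jump (t : ℝ) : ℝ := ∑ α, ‖F.v α t - F.vIn α t‖

/-- `jump` vanishes off the collision times, which are finite in bounded intervals, so this is a
finite sum. -/
def totalJump (s t : ℝ) : ℝ := ∑ᶠ u ∈ Ioc s t, F.jump u

theorem support_jump_subset : Function.support F.jump ⊆ F.collisionTimes := fun t ht => by
  by_contra h
  exact ht (Finset.sum_eq_zero fun α _ => by
    rw [F.vIn_eq_v_of_notMem_collisionTimes h, sub_self, norm_zero])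

theorem totalJump_self (t : ℝ) : F.totalJump t t = 0 := by
  simp [totalJump]

theorem totalJump_add {s u t : ℝ} (hsu : s ≤ u) (hut : u ≤ t) :
    F.totalJump s t = F.totalJump s u + F.totalJump u t := by
  have hfin : ∀ a b, (Ioc a b ∩ Function.support F.jump).Finite := fun a b =>
    (F.finite_collisionTimes_inter_Icc a b).subset fun x hx =>
      ⟨F.support_jump_subset hx.2, Ioc_subset_Icc_self hx.1⟩
  rw [totalJump, ← Ioc_union_Ioc_eq_Ioc hsu hut,
    finsum_mem_union' (Ioc_disjoint_Ioc_of_le le_rfl) (hfin s u) (hfin u t)]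
  rfl

theorem totalJump_eq_jump {s t : ℝ} (hst : s < t) (h : Disjoint F.collisionTimes (Ioo s t)) :
    F.totalJump s t = F.jump t := by
  rw [totalJump, finsum_mem_inter_support_eq' _ _ {t}, finsum_mem_singleton]
  intro u hu
  have hu' : u ∉ Ioo s t := disjoint_left.1 h (F.support_jump_subset hu)
  constructor
  · intro hmem
    exact eq_of_le_of_not_lt hmem.2 fun hlt => hu' ⟨hmem.1, hlt⟩
  · rintro rfl
    exact ⟨hst, le_rfl⟩

theorem sum_inner_y_v_sub_vIn (t : ℝ) :
    ∑ α, ⟪F.y α t, F.v α t - F.vIn α t⟫ = F.a * F.jump t := by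
  by_cases ht : t ∈ F.collisionTimes
  · obtain ⟨α, β, hαβ, hα, hdist, hothers⟩ := F.exists_collision_partner ht
    obtain ⟨-, -, -, hrefl, ⟨c, hc⟩, happroach, hseparate⟩ :=
      F.collision_rules α β t hα hαβ.symm hdist
    set d := F.v α t - F.vIn α t
    set r := F.y β t - F.y α t
    have hdβ : F.v β t - F.vIn β t = -d := by rw [hrefl]; abel
    have hout : F.v β t - F.v α t = (F.vIn β t - F.vIn α t) - (2 : ℝ) • d := by
      linear_combination (norm := module) hdβ
    -- after the collision the particles separate, so the impulse on `α` points away from `β`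
    have hneg : ⟪r, d⟫ < 0 := by
      rw [hout, inner_sub_left, real_inner_smul_left, real_inner_comm r d] at hseparate
      linarith
    have hsum : ∑ γ, ⟪F.y γ t, F.v γ t - F.vIn γ t⟫ = -⟪r, d⟫ := by
      rw [Fintype.sum_eq_add α β hαβ fun γ hγ => by rw [hothers γ hγ, sub_self, inner_zero_right],
        hdβ, inner_neg_right, ← sub_eq_add_neg, ← inner_sub_left, ← neg_sub, inner_neg_left]
    have hjump : F.jump t = 2 * ‖d‖ := by
      rw [jump, Fintype.sum_eq_add α β hαβ fun γ hγ => by rw [hothers γ hγ, sub_self, norm_zero],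
        hdβ, norm_neg, two_mul]
    have hr : ‖r‖ = 2 * F.a := by rw [← dist_eq_norm]; exact hdist
    rw [hsum, hjump, real_inner_eq_neg_norm_mul_norm_of_eq_smul hc hneg, hr]
    ring
  · rw [show F.jump t = 0 by simpa using mt (F.support_jump_subset ·) ht]
    simp [F.vIn_eq_v_of_notMem_collisionTimes ht]

def positions (t : ℝ) : PiLp 2 (fun _ : Fin N => EuclideanSpace ℝ (Fin n)) :=
  WithLp.toLp 2 (fun α => F.y α t)

def velocities (t : ℝ) : PiLp 2 (fun _ : Fin N => EuclideanSpace ℝ (Fin n)) :=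
  WithLp.toLp 2 (fun α => F.v α t)

def virial (t : ℝ) : ℝ := ∑ α, ⟪F.y α t, F.v α t⟫

theorem sum_norm_v_sq (t : ℝ) : ∑ α, ‖F.v α t‖ ^ 2 = 2 * F.totalEnergy := by
  have h := F.sum_comp_v_eq isCollisionInvariant_norm_sq 0 t
  beta_reduce at h
  rw [h, totalEnergy]
  ring

theorem norm_velocities (t : ℝ) : ‖F.velocities t‖ = √(2 * F.totalEnergy) := by
  rw [← F.sum_norm_v_sq t, ← Real.sqrt_sq (norm_nonneg (F.velocities t)), PiLp.norm_sq_eq_of_L2]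
  rfl

theorem abs_virial_le (t : ℝ) : |F.virial t| ≤ ‖F.positions t‖ * √(2 * F.totalEnergy) := by
  rw [← F.norm_velocities t]
  exact abs_real_inner_le_norm (F.positions t) (F.velocities t)

theorem virial_eq {s t : ℝ} (hst : s ≤ t) :
    F.virial t = F.virial s + (t - s) * (2 * F.totalEnergy) + F.a * F.totalJump s t := by
  refine F.induction_on_collisions
    (P := fun s t =>
      F.virial t = F.virial s + (t - s) * (2 * F.totalEnergy) + F.a * F.totalJump s t)
    (fun t => by simp [totalJump_self]) (fun s u t hsu hut h₁ h₂ => ?_) (fun s t hst h => ?_) hst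
  · rw [h₂, h₁, F.totalJump_add hsu.le hut.le]
    ring
  · have hα : ∀ α, ⟪F.y α t, F.v α t⟫ = ⟪F.y α s, F.v α s⟫ + (t - s) * ‖F.v α s‖ ^ 2
        + ⟪F.y α t, F.v α t - F.vIn α t⟫ := fun α => by
      obtain ⟨hv, hy⟩ := F.vIn_eq_and_y_eq_of_disjoint hst h α
      rw [inner_sub_right, hv, hy]
      simp only [inner_add_left, real_inner_smul_left, real_inner_self_eq_norm_sq]
      ring
    rw [virial, virial, Finset.sum_congr rfl fun α _ => hα α, Finset.sum_add_distrib,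
      Finset.sum_add_distrib, ← Finset.mul_sum, F.sum_norm_v_sq, F.sum_inner_y_v_sub_vIn,
      F.totalJump_eq_jump hst h]

theorem norm_positions_sub_le {s t : ℝ} (hst : s ≤ t) :
    ‖F.positions t - F.positions s‖ ≤ (t - s) * √(2 * F.totalEnergy) := by
  refine F.induction_on_collisions
    (P := fun s t => ‖F.positions t - F.positions s‖ ≤ (t - s) * √(2 * F.totalEnergy))
    (fun t => by simp) (fun s u t _ _ h₁ h₂ => ?_) (fun s t hst h => le_of_eq ?_) hst
  · linarith [norm_sub_le_norm_sub_add_norm_sub (F.positions t) (F.positions u) (F.positions s)]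
  · have : F.positions t - F.positions s = (t - s) • F.velocities s := by
      ext α : 1
      simp [positions, velocities, (F.vIn_eq_and_y_eq_of_disjoint hst h α).2]
    rw [this, norm_smul, Real.norm_of_nonneg (sub_nonneg.2 hst.le), norm_velocities]

theorem norm_v_sub_le_totalJump {s t : ℝ} (hst : s ≤ t) (α : Fin N) :
    ‖F.v α t - F.v α s‖ ≤ F.totalJump s t := by
  refine F.induction_on_collisions (P := fun s t => ‖F.v α t - F.v α s‖ ≤ F.totalJump s t)
    (fun t => by simp [totalJump_self]) (fun s u t hsu hut h₁ h₂ => ?_) (fun s t hst h => ?_) hst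
  · rw [F.totalJump_add hsu.le hut.le]
    linarith [norm_sub_le_norm_sub_add_norm_sub (F.v α t) (F.v α u) (F.v α s)]
  · rw [F.totalJump_eq_jump hst h, ← (F.vIn_eq_and_y_eq_of_disjoint hst h α).1]
    exact Finset.single_le_sum (f := fun β => ‖F.v β t - F.vIn β t‖)
      (fun _ _ => norm_nonneg _) (Finset.mem_univ α)

theorem a_mul_totalJump_le {s t : ℝ} (hst : s ≤ t) :
    F.a * F.totalJump s t ≤ (‖F.positions s‖ + ‖F.positions t‖) * √(2 * F.totalEnergy)
      - (t - s) * √(2 * F.totalEnergy) ^ 2 := by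
  have henergy : 0 ≤ 2 * F.totalEnergy := by rw [totalEnergy]; positivity
  rw [Real.sq_sqrt henergy]
  linarith [F.virial_eq hst, (abs_le.1 (F.abs_virial_le s)).1, (abs_le.1 (F.abs_virial_le t)).2]

theorem totalJump_le_left {s t : ℝ} (hst : s ≤ t) :
    F.totalJump s t ≤ 2 * ‖F.positions s‖ * √(2 * F.totalEnergy) / F.a := by
  rw [le_div_iff₀' F.a_pos]
  have hY : ‖F.positions t‖ ≤ ‖F.positions s‖ + (t - s) * √(2 * F.totalEnergy) := by
    linarith [norm_le_insert' (F.positions t) (F.positions s), F.norm_positions_sub_le hst]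
  linarith [F.a_mul_totalJump_le hst,
    mul_le_mul_of_nonneg_right hY (Real.sqrt_nonneg (2 * F.totalEnergy))]

theorem totalJump_le_right {s t : ℝ} (hst : s ≤ t) :
    F.totalJump s t ≤ 2 * ‖F.positions t‖ * √(2 * F.totalEnergy) / F.a := by
  rw [le_div_iff₀' F.a_pos]
  have hY : ‖F.positions s‖ ≤ ‖F.positions t‖ + (t - s) * √(2 * F.totalEnergy) := by
    linarith [norm_le_insert (F.positions t) (F.positions s), F.norm_positions_sub_le hst]
  linarith [F.a_mul_totalJump_le hst,
    mul_le_mul_of_nonneg_right hY (Real.sqrt_nonneg (2 * F.totalEnergy))]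

theorem exists_tendsto_v_atTop (α : Fin N) : ∃ L, Tendsto (F.v α) atTop (𝓝 L) :=
  exists_tendsto_atTop_of_dist_le_sub (g := F.totalJump 0)
    ⟨_, forall_mem_image.2 fun _ ht => F.totalJump_le_left ht⟩ fun s t hs hst => by
      rw [dist_comm, dist_eq_norm, F.totalJump_add hs hst, add_sub_cancel_left]
      exact F.norm_v_sub_le_totalJump hst α

theorem exists_tendsto_v_atBot (α : Fin N) : ∃ L, Tendsto (F.v α) atBot (𝓝 L) := by
  obtain ⟨L, hL⟩ := exists_tendsto_atTop_of_dist_le_sub (f := fun t => F.v α (-t))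
    (g := fun t => F.totalJump (-t) 0)
    ⟨_, forall_mem_image.2 fun _ ht => F.totalJump_le_right (neg_nonpos.2 ht)⟩ fun s t hs hst => by
      rw [dist_eq_norm, F.totalJump_add (neg_le_neg hst) (neg_nonpos.2 hs), add_sub_cancel_right]
      exact F.norm_v_sub_le_totalJump (neg_le_neg hst) α
  exact ⟨L, by simpa [Function.comp_def] using hL.comp tendsto_neg_atBot_atTop⟩

theorem vdev_nonneg : 0 ≤ F.vdev := Real.sqrt_nonneg _

theorem sum_norm_v_zero_sub_meanVelocity_sq :
    ∑ α, ‖F.v α 0 - F.meanVelocity‖ ^ 2 = N * F.vdev ^ 2 := by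
  rcases Nat.eq_zero_or_pos N with rfl | hN
  · simp
  have hN' : (N : ℝ) ≠ 0 := by positivity
  set C := ∑ α, ‖F.v α 0 - F.meanVelocity‖ ^ 2 with hC
  have hspread : F.vbar ^ 2 - ‖F.meanVelocity‖ ^ 2 = C / N := by
    rw [vbar, Real.sq_sqrt (by rw [totalEnergy]; positivity), hC, sum_norm_sub_sq, totalEnergy,
      meanVelocity, real_inner_smul_right, real_inner_self_eq_norm_sq, norm_smul, Real.norm_eq_abs,
      abs_inv, Nat.abs_cast, Fintype.card_fin]
    field_simp
    ring
  rw [vdev, Real.sq_sqrt (hspread ▸ by positivity), hspread]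
  field_simp

theorem sum_norm_sub_v_zero_le_of_tendsto {l : Filter ℝ} [l.NeBot]
    {vlim : Fin N → EuclideanSpace ℝ (Fin n)} (h : ∀ α, Tendsto (F.v α) l (𝓝 (vlim α))) :
    ∑ α, ‖vlim α - F.v α 0‖ ≤ 2 * N * F.vdev := by
  set w := F.meanVelocity
  have hlim : ∑ α, ‖vlim α - w‖ ^ 2 = N * F.vdev ^ 2 := by
    rw [← F.sum_norm_v_zero_sub_meanVelocity_sq]
    refine tendsto_nhds_unique (tendsto_finsetSum _ fun α _ => ((h α).sub_const w).norm.pow 2) ?_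
    have hconst := F.sum_comp_v_eq (isCollisionInvariant_norm_sub_sq w) 0
    beta_reduce at hconst
    simp only [hconst]
    exact tendsto_const_nhds
  have hspread : ∀ x : Fin N → EuclideanSpace ℝ (Fin n),
      ∑ α, ‖x α - w‖ ^ 2 = N * F.vdev ^ 2 → ∑ α, ‖x α - w‖ ≤ N * F.vdev := fun x hx =>
    calc ∑ α, ‖x α - w‖ ≤ √(N * ∑ α, ‖x α - w‖ ^ 2) := by
          simpa using sum_norm_le_sqrt_card_mul_sum_sq (fun α => x α - w)
      _ = N * F.vdev := by
          rw [hx, show (N : ℝ) * (N * F.vdev ^ 2) = (N * F.vdev) ^ 2 by ring,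
            Real.sqrt_sq (mul_nonneg N.cast_nonneg F.vdev_nonneg)]
  calc ∑ α, ‖vlim α - F.v α 0‖ ≤ ∑ α, (‖vlim α - w‖ + ‖F.v α 0 - w‖) :=
        Finset.sum_le_sum fun α _ => by simpa only [dist_eq_norm] using dist_triangle_right _ _ w
    _ ≤ N * F.vdev + N * F.vdev := by
        rw [Finset.sum_add_distrib]
        exact add_le_add (hspread _ hlim) (hspread _ F.sum_norm_v_zero_sub_meanVelocity_sq)
    _ = 2 * N * F.vdev := by ring

end HardSphereFlow

theorem hard_spheres_scattering_estimate_general (n : ℕ) :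
    ∃ c : ℝ, ∀ (N : ℕ) (F : HardSphereFlow n N),
      ∃ vplus vminus : Fin N → EuclideanSpace ℝ (Fin n),
        (∀ α : Fin N, Tendsto (F.v α) atTop (nhds (vplus α))) ∧
        (∀ α : Fin N, Tendsto (F.v α) atBot (nhds (vminus α))) ∧
        ∑ α : Fin N, ‖vplus α - F.v α 0‖ ≤ c * (N : ℝ) ^ 2 * F.vdev ∧
        ∑ α : Fin N, ‖vminus α - F.v α 0‖ ≤ c * (N : ℝ) ^ 2 * F.vdev := by
  refine ⟨2, fun N F => ?_⟩
  choose vplus hplus using F.exists_tendsto_v_atTop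
  choose vminus hminus using F.exists_tendsto_v_atBot
  have hN : 2 * (N : ℝ) * F.vdev ≤ 2 * (N : ℝ) ^ 2 * F.vdev := by
    have : (N : ℝ) ≤ (N : ℝ) ^ 2 := by exact_mod_cast Nat.le_self_pow two_ne_zero N
    have := F.vdev_nonneg
    gcongr
  exact ⟨vplus, vminus, hplus, hminus, (F.sum_norm_sub_v_zero_le_of_tendsto hplus).trans hN,
    (F.sum_norm_sub_v_zero_le_of_tendsto hminus).trans hN⟩

/-- **Scattering estimate** (Serre, inequality (1.9)). In every hard-sphere flow, each
particle `α` admits limit velocities `v_{α±}` as `t → ±∞`, and there is a finite constant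
`c_n`, depending only on the space dimension `n`, such that
`∑_α |v_{α±} - v_α(0)| ≤ c_n N² 𝐯`. -/
theorem hard_spheres_scattering_estimate (n : ℕ) (hn : 1 ≤ n) :
    ∃ c : ℝ, ∀ (N : ℕ) (F : HardSphereFlow n N),
      ∃ vplus vminus : Fin N → EuclideanSpace ℝ (Fin n),
        (∀ α : Fin N, Tendsto (F.v α) atTop (nhds (vplus α))) ∧
        (∀ α : Fin N, Tendsto (F.v α) atBot (nhds (vminus α))) ∧
        ∑ α : Fin N, ‖vplus α - F.v α 0‖ ≤ c * (N : ℝ) ^ 2 * F.vdev ∧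
        ∑ α : Fin N, ‖vminus α - F.v α 0‖ ≤ c * (N : ℝ) ^ 2 * F.vdev :=
  hard_spheres_scattering_estimate_general n
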